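/- arXiv:1007.2299 — 3 statements merged into one kernel-verified Lean document; each statement's English description precedes it below -/
import Mathlib

section
/- Let f be the bilinear form on ℤ^(n+1) given by f(x,y) = -3 x₀ y₀ + x₁ y₁ + ... + xₙ yₙ. If e ∈ ℤ^(n+1) is a primitive vector (gcd of coordinates is 1) with f(e,e) > 0 such that the reflection x ↦ x - 2 f(x,e)/f(e,e) · e maps ℤ^(n+1) to itself, then f(e,e) ∈ {1, 2, 3, 6}; moreover if f(e,e) ∈ {3, 6} then 3 divides eⱼ for every j ≥ 1. -/
/-- The bilinear form `-3 x₀ y₀ + x₁ y₁ + ⋯ + xₙ yₙ` on `ℤ^(n+1)`. -/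
def Bf (n : ℕ) (x y : Fin (n + 1) → ℤ) : ℤ :=
  (∑ i, x i * y i) - 4 * x 0 * y 0

theorem stmt0 (n : ℕ) (e : Fin (n + 1) → ℤ)
    (hprim : Finset.univ.gcd e = 1)
    (hpos : 0 < Bf n e e)
    (hrefl : ∀ x : Fin (n + 1) → ℤ, ∃ y : Fin (n + 1) → ℤ,
      ∀ i, (y i : ℚ) = (x i : ℚ) - 2 * (Bf n x e : ℚ) / (Bf n e e : ℚ) * (e i : ℚ)) :
    (Bf n e e = 1 ∨ Bf n e e = 2 ∨ Bf n e e = 3 ∨ Bf n e e = 6) ∧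
      ((Bf n e e = 3 ∨ Bf n e e = 6) → ∀ j : Fin (n + 1), j ≠ 0 → (3 : ℤ) ∣ e j) := by
  set N := Bf n e e with hNdef
  have hN0 : (N : ℚ) ≠ 0 := by exact_mod_cast hpos.ne'
  -- key divisibility: N ∣ 2 * Bf x e * e i
  have key : ∀ x : Fin (n+1) → ℤ, ∀ i, N ∣ 2 * Bf n x e * e i := by
    intro x i
    obtain ⟨y, hy⟩ := hrefl x
    have h := hy i
    refine ⟨x i - y i, ?_⟩
    have hq : ((2 * Bf n x e * e i : ℤ) : ℚ) = ((N * (x i - y i) : ℤ) : ℚ) := by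
      push_cast
      field_simp at h
      linarith
    exact_mod_cast hq
  -- compute Bf (Pi.single j 1) e
  have hB : ∀ j : Fin (n+1), Bf n (Pi.single j 1) e
      = e j - 4 * (if (0 : Fin (n+1)) = j then 1 else 0) * e 0 := by
    intro j
    unfold Bf
    congr 1 <;> simp [Pi.single_apply]
  have key6 : ∀ j i : Fin (n+1), N ∣ 6 * e j * e i := by
    intro j i
    by_cases hj : (0 : Fin (n+1)) = j
    · have h := key (Pi.single j 1) i
      rw [hB j, if_pos hj] at h
      subst hj
      have : 6 * e 0 * e i = -(2 * (e 0 - 4 * 1 * e 0) * e i) := by ring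
      rw [this]
      exact h.neg_right
    · have h := key (Pi.single j 1) i
      rw [hB j, if_neg hj] at h
      have : 6 * e j * e i = 3 * (2 * (e j - 4 * 0 * e 0) * e i) := by ring
      rw [this]
      exact h.mul_left 3
  have h6j : ∀ j, N ∣ 6 * e j := by
    intro j
    have h : N ∣ Finset.univ.gcd (fun i => 6 * e j * e i) :=
      Finset.dvd_gcd fun i _ => key6 j i
    rw [Finset.gcd_mul_left, hprim, mul_one] at h
    exact dvd_normalize_iff.mp h
  have hN6 : N ∣ 6 := by
    have h : N ∣ Finset.univ.gcd (fun j => 6 * e j) :=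
      Finset.dvd_gcd fun j _ => h6j j
    rw [Finset.gcd_mul_left, hprim, mul_one] at h
    have := dvd_normalize_iff.mp h
    simpa using this
  constructor
  · have hle : N ≤ 6 := Int.le_of_dvd (by norm_num) hN6
    interval_cases N <;> omega
  · rintro h3 j hj
    have hdvdN : (3 : ℤ) ∣ N := by rcases h3 with h | h <;> rw [h] <;> norm_num
    have h := key (Pi.single j 1) j
    rw [hB j, if_neg (fun h' => hj h'.symm)] at h
    have h3d : (3 : ℤ) ∣ (2 * e j) * e j := by
      have : (2 * e j) * e j = 2 * (e j - 4 * 0 * e 0) * e j := by ring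
      rw [this]
      exact hdvdN.trans h
    rcases (Int.prime_three.dvd_mul).mp h3d with h | h
    · omega
    · exact h
end

section
/- The vector e = 5v₀ + 3(v₁ + … + v₉) ∈ ℤ^(n+1) (n ≥ 9) has f-norm 6 with respect to f(x) = -3x₀² + Σxᵢ², all its spatial coordinates are divisible by 3, and it has nonpositive f-inner product with each of the vectors eᵢ = -vᵢ + v_{i+1} (1 ≤ i < n), eₙ = -vₙ, v₀ + 3v₁, and v₀ + v₁ + v₂ + v₃ + v₄ + v₅. -/
/-- The bilinear form `-3 x₀ y₀ + x₁ y₁ + ⋯ + xₙ yₙ` on integer vectors indexed by `ℕ`,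
truncated at index `n`. -/
def B (n : ℕ) (x y : ℕ → ℤ) : ℤ :=
  -3 * x 0 * y 0 + ∑ i ∈ Finset.Icc 1 n, x i * y i

theorem stmt8 (n : ℕ) (hn : 9 ≤ n) :
    let e : ℕ → ℤ := fun i => if i = 0 then 5 else if i ≤ 9 then 3 else 0
    B n e e = 6 ∧
    (∀ i, 1 ≤ i → (3 : ℤ) ∣ e i) ∧
    (∀ i, 1 ≤ i → i < n →
      B n e (fun j => if j = i then -1 else if j = i + 1 then 1 else 0) ≤ 0) ∧
    B n e (fun j => if j = n then -1 else 0) ≤ 0 ∧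
    B n e (fun j => if j = 0 then 1 else if j = 1 then 3 else 0) ≤ 0 ∧
    B n e (fun j => if j ≤ 5 then 1 else 0) ≤ 0 := by
  intro e
  have he0 : e 0 = 5 := by simp [e]
  have key : ∀ g : ℕ → ℤ, ∀ s : Finset ℕ, s ⊆ Finset.Icc 1 n →
      (∀ j ∈ Finset.Icc 1 n, j ∉ s → e j * g j = 0) →
      ∑ j ∈ Finset.Icc 1 n, e j * g j = ∑ j ∈ s, e j * g j := by
    intro g s hs h
    exact (Finset.sum_subset hs h).symm
  refine ⟨?_, ?_, ?_, ?_, ?_, ?_⟩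
  · have h9 : Finset.Icc 1 9 ⊆ Finset.Icc 1 n := by
      intro j hj
      simp only [Finset.mem_Icc] at *
      omega
    rw [B, key e (Finset.Icc 1 9) h9 (by
      intro j hj hj'
      simp only [Finset.mem_Icc] at *
      have h1 : ¬ j ≤ 9 := by omega
      have h0 : ¬ j = 0 := by omega
      show (if j = 0 then (5:ℤ) else if j ≤ 9 then 3 else 0) * _ = 0
      rw [if_neg h0, if_neg h1]
      ring)]
    decide
  · intro i hi
    have h1 : e i = if i ≤ 9 then 3 else 0 := if_neg (by omega)
    rw [h1]
    split <;> decide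
  · intro i hi hin
    have hsub : ({i, i + 1} : Finset ℕ) ⊆ Finset.Icc 1 n := by
      intro j hj
      simp only [Finset.mem_insert, Finset.mem_singleton] at hj
      simp only [Finset.mem_Icc]
      omega
    rw [B, key _ {i, i + 1} hsub (by
      intro j hj hj'
      simp only [Finset.mem_insert, Finset.mem_singleton, not_or] at hj'
      simp [hj'.1, hj'.2])]
    rw [Finset.sum_pair (by omega)]
    simp only [he0, if_pos rfl, (by omega : i + 1 ≠ i), if_false, if_pos rfl]
    have h1 : e i = if i ≤ 9 then 3 else 0 := if_neg (by omega)
    have h2 : e (i + 1) = if i + 1 ≤ 9 then 3 else 0 := if_neg (by omega)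
    rw [h1, h2]
    split_ifs <;> omega
  · have hsub : ({n} : Finset ℕ) ⊆ Finset.Icc 1 n := by
      intro j hj
      simp only [Finset.mem_singleton] at hj
      simp only [Finset.mem_Icc]
      omega
    rw [B, key _ {n} hsub (by
      intro j hj hj'
      simp only [Finset.mem_singleton] at hj'
      simp [hj'])]
    simp only [Finset.sum_singleton, he0, if_pos rfl]
    have h1 : e n = if n ≤ 9 then 3 else 0 := if_neg (by omega)
    rw [h1]
    split_ifs <;> omega
  · have hsub : ({1} : Finset ℕ) ⊆ Finset.Icc 1 n := by
      intro j hj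
      simp only [Finset.mem_singleton] at hj
      simp only [Finset.mem_Icc]
      omega
    rw [B, key _ {1} hsub (by
      intro j hj hj'
      simp only [Finset.mem_singleton] at hj'
      simp only [Finset.mem_Icc] at hj
      have h0 : ¬ j = 0 := by omega
      rw [if_neg h0, if_neg hj', mul_zero])]
    simp [e, he0]
  · have hsub : Finset.Icc 1 5 ⊆ Finset.Icc 1 n := by
      intro j hj
      simp only [Finset.mem_Icc] at *
      omega
    rw [B, key _ (Finset.Icc 1 5) hsub (by
      intro j hj hj'
      simp only [Finset.mem_Icc] at *
      have h5 : ¬ j ≤ 5 := by omega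
      rw [if_neg h5, mul_zero])]
    rw [he0]
    decide
end

section
/- Every vector e = Σᵢ₌₀ⁿ kᵢvᵢ ∈ ℤ^(n+1) (n ≥ 14) that is f-orthogonal to all of: -vᵢ + v_{i+1} for i ∈ {1,3,4,5,6,7,9,10,11,12,13}, v₀ + v₁ + ... + v₅, 2(v₀+v₁) + v₂ + ... + v₁₁, and 2v₀ + v₁ + ... + v₁₄, must have the form k₁ = k₂ = 3q, k₃ = ... = k₈ = p, k₉ = ... = k₁₄ = q, and k₀ = 2q + p for some integers p, q, and consequently f(e,e) = 3(p - 2q)² + Σᵢ₌₁₅ⁿ kᵢ². -/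
/-- The mirror `-vᵢ + v_{i+1}`. -/
def mir (i : ℕ) : ℕ → ℤ := fun j => if j = i then -1 else if j = i + 1 then 1 else 0

lemma split14' (n : ℕ) (hn : 14 ≤ n) (g : ℕ → ℤ) :
    ∑ j ∈ Finset.Icc 1 n, g j = ∑ j ∈ Finset.Icc 1 14, g j + ∑ j ∈ Finset.Icc 15 n, g j := by
  have h1 : Finset.Icc 1 n = Finset.Ioc 0 n := by rw [← Finset.Icc_add_one_left_eq_Ioc]; rfl
  have h2 : Finset.Icc 1 14 = Finset.Ioc 0 14 := by rw [← Finset.Icc_add_one_left_eq_Ioc]; rfl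
  have h3 : Finset.Icc 15 n = Finset.Ioc 14 n := by rw [← Finset.Icc_add_one_left_eq_Ioc]; rfl
  rw [h1, h2, h3, Finset.sum_Ioc_consecutive _ (by omega) hn]

lemma icc14expand (g : ℕ → ℤ) : ∑ j ∈ Finset.Icc 1 14, g j =
    g 1 + g 2 + g 3 + g 4 + g 5 + g 6 + g 7 + g 8 + g 9 + g 10 + g 11 + g 12 + g 13 + g 14 := by
  show ∑ j ∈ (Finset.Icc 1 14 : Finset ℕ), g j = _
  rw [show (Finset.Icc 1 14 : Finset ℕ) = {1,2,3,4,5,6,7,8,9,10,11,12,13,14} from rfl]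
  simp [Finset.sum_insert, Finset.mem_insert]
  ring

lemma Bexpand (n : ℕ) (hn : 14 ≤ n) (k c : ℕ → ℤ) (hc : ∀ j, 15 ≤ j → c j = 0) :
    B n k c = -3 * k 0 * c 0 + (k 1 * c 1 + k 2 * c 2 + k 3 * c 3 + k 4 * c 4 + k 5 * c 5
      + k 6 * c 6 + k 7 * c 7 + k 8 * c 8 + k 9 * c 9 + k 10 * c 10 + k 11 * c 11
      + k 12 * c 12 + k 13 * c 13 + k 14 * c 14) := by
  unfold B
  have ht : ∑ j ∈ Finset.Icc 15 n, k j * c j = 0 :=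
    Finset.sum_eq_zero (fun j hj => by rw [hc j (Finset.mem_Icc.mp hj).1, mul_zero])
  rw [split14' n hn, ht, add_zero, icc14expand]

theorem stmt9 (n : ℕ) (hn : 14 ≤ n) (k : ℕ → ℤ)
    (hmir : ∀ i ∈ ({1, 3, 4, 5, 6, 7, 9, 10, 11, 12, 13} : Finset ℕ), B n k (mir i) = 0)
    (hw1 : B n k (fun j => if j ≤ 5 then 1 else 0) = 0)
    (hw2 : B n k (fun j => if j ≤ 1 then 2 else if j ≤ 11 then 1 else 0) = 0)
    (hw3 : B n k (fun j => if j = 0 then 2 else if j ≤ 14 then 1 else 0) = 0) :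
    ∃ p q : ℤ, k 1 = 3 * q ∧ k 2 = 3 * q ∧
      (∀ i, 3 ≤ i → i ≤ 8 → k i = p) ∧
      (∀ i, 9 ≤ i → i ≤ 14 → k i = q) ∧
      k 0 = 2 * q + p ∧
      B n k k = 3 * (p - 2 * q) ^ 2 + ∑ i ∈ Finset.Icc 15 n, (k i) ^ 2 := by
  have hm : ∀ i ∈ ({1, 3, 4, 5, 6, 7, 9, 10, 11, 12, 13} : Finset ℕ),
      k (i + 1) = k i := by
    intro i hi
    have h := hmir i hi
    rw [Bexpand n hn k (mir i) (fun j hj => by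
      fin_cases hi <;> simp [mir] <;> omega)] at h
    fin_cases hi <;> simp [mir] at h <;> linarith
  have e2 : k 2 = k 1 := hm 1 (by decide)
  have e4 : k 4 = k 3 := hm 3 (by decide)
  have e5 : k 5 = k 4 := hm 4 (by decide)
  have e6 : k 6 = k 5 := hm 5 (by decide)
  have e7 : k 7 = k 6 := hm 6 (by decide)
  have e8 : k 8 = k 7 := hm 7 (by decide)
  have e10 : k 10 = k 9 := hm 9 (by decide)
  have e11 : k 11 = k 10 := hm 10 (by decide)
  have e12 : k 12 = k 11 := hm 11 (by decide)
  have e13 : k 13 = k 12 := hm 12 (by decide)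
  have e14 : k 14 = k 13 := hm 13 (by decide)
  rw [Bexpand n hn k _ (fun j hj => if_neg (by omega))] at hw1
  rw [Bexpand n hn k _ (fun j hj => by rw [if_neg (by omega), if_neg (by omega)])] at hw2
  rw [Bexpand n hn k _ (fun j hj => by rw [if_neg (by omega), if_neg (by omega)])] at hw3
  norm_num at hw1 hw2 hw3
  refine ⟨k 3, k 9, ?_, ?_, ?_, ?_, ?_, ?_⟩
  · linarith
  · linarith
  · intro i h3 h8; interval_cases i <;> linarith
  · intro i h9 h14; interval_cases i <;> linarith
  · linarith
  · unfold B
    rw [split14' n hn, icc14expand]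
    have hsq : ∑ i ∈ Finset.Icc 15 n, (k i) ^ 2 = ∑ i ∈ Finset.Icc 15 n, k i * k i := by
      apply Finset.sum_congr rfl; intro i _; ring
    rw [hsq]
    have h0 : k 0 = 2 * k 9 + k 3 := by linarith
    have h1 : k 1 = 3 * k 9 := by linarith
    rw [h0, h1, e2, h1, e4, e5, e4, e6, e5, e4, e7, e6, e5, e4, e8, e7, e6, e5, e4,
      e10, e11, e10, e12, e11, e10, e13, e12, e11, e10, e14, e13, e12, e11, e10]
    ring
end
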